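/- Generic Bregman–Fenchel-Young decomposition for the Sinkhorn negentropy: assume the kernel matrix K = (exp(−c_{ij}/2))_{i,j} is positive definite. For every α ∈ △^d and f ∈ ℝ^d, D_Ω(α, g-softmax(f)) = ℓ_Ω(α, f) + ⟨f − ∇Ω(g-softmax(f)), α − g-softmax(f)⟩. -/

import Mathlib

open Finset Real Filter

noncomputable section

/-- The probability simplex in `ℝ^d`. -/
def simplexS (d : ℕ) : Set (Fin d → ℝ) := stdSimplex ℝ (Fin d)

/-- Transport plans between `α` and `β`: nonnegative matrices with prescribed marginals,
supported where `α i * β j > 0`. -/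
def couplings {d : ℕ} (α β : Fin d → ℝ) : Set (Matrix (Fin d) (Fin d) ℝ) :=
  {p | (∀ i j, 0 ≤ p i j) ∧ (∀ i, ∑ j, p i j = α i) ∧ (∀ j, ∑ i, p i j = β j) ∧
    ∀ i j, α i * β j = 0 → p i j = 0}

/-- The entropy-regularized transport cost of a plan `p` (with the convention `0 log 0 = 0`,
which holds automatically since `Real.log 0 = 0`). -/
def OTcost {d : ℕ} (C : Matrix (Fin d) (Fin d) ℝ) (ε : ℝ) (α β : Fin d → ℝ)
    (p : Matrix (Fin d) (Fin d) ℝ) : ℝ :=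
  (∑ i, ∑ j, p i j * C i j) + ε * ∑ i, ∑ j, p i j * Real.log (p i j / (α i * β j))

/-- Entropy-regularized optimal transport cost `OT_{C,ε}(α,β)`. -/
def OT {d : ℕ} (C : Matrix (Fin d) (Fin d) ℝ) (ε : ℝ) (α β : Fin d → ℝ) : ℝ :=
  sInf (OTcost C ε α β '' couplings α β)

/-- The Sinkhorn negentropy `Ω_C(α) = -(1/2) OT_{C,2}(α,α)`. -/
def Omega {d : ℕ} (C : Matrix (Fin d) (Fin d) ℝ) (α : Fin d → ℝ) : ℝ :=
  -(1 / 2) * OT C 2 α α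

open scoped Classical

/-- `Φ_C(α,f) = Σ_{i,j} α_i α_j exp(-(f_i + f_j + c_{ij})/2)`. -/
def Phi {d : ℕ} (C : Matrix (Fin d) (Fin d) ℝ) (α f : Fin d → ℝ) : ℝ :=
  ∑ i, ∑ j, α i * α j * Real.exp (-(f i + f j + C i j) / 2)

/-- The geometric log-sum-exp `Ω_C^*(f) = -log min_{α ∈ △^d} Φ_C(α, f)`. -/
def OmegaStar {d : ℕ} (C : Matrix (Fin d) (Fin d) ℝ) (f : Fin d → ℝ) : ℝ :=
  -Real.log (sInf ((fun α => Phi C α f) '' simplexS d))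

/-- The geometric softmax: the (unique, when the kernel is positive definite) minimizer of
`Φ_C(·, f)` over the simplex. -/
def gsoftmax {d : ℕ} (C : Matrix (Fin d) (Fin d) ℝ) (f : Fin d → ℝ) : Fin d → ℝ :=
  if h : ∃ α ∈ simplexS d, IsMinOn (fun β => Phi C β f) (simplexS d) α
  then h.choose else fun _ => 0

/-- The soft C-transform `T(f,α)_i = -2 log Σ_j α_j exp((f_j - c_{ij})/2)`. -/
def Tsoft {d : ℕ} (C : Matrix (Fin d) (Fin d) ℝ) (f α : Fin d → ℝ) : Fin d → ℝ :=
  fun i => -2 * Real.log (∑ j, α j * Real.exp ((f j - C i j) / 2))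

/-- `f` is the symmetric Sinkhorn potential of `α`: `-f = T(-f, α)`. -/
def IsSinkhornPotential {d : ℕ} (C : Matrix (Fin d) (Fin d) ℝ) (α f : Fin d → ℝ) : Prop :=
  -f = Tsoft C (-f) α

/-- The symmetric Sinkhorn potential `∇Ω(α)`: the (unique, when the kernel is positive
definite) `f` with `-f = T(-f, α)`. -/
def gradOmega {d : ℕ} (C : Matrix (Fin d) (Fin d) ℝ) (α : Fin d → ℝ) : Fin d → ℝ :=
  if h : ∃ f : Fin d → ℝ, IsSinkhornPotential C α f then h.choose else fun _ => 0

/-- The extrapolation `f^E = -T(-(f - Ω_C^*(f)·1), g-softmax(f)) + Ω_C^*(f)·1`. -/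
def extrap {d : ℕ} (C : Matrix (Fin d) (Fin d) ℝ) (f : Fin d → ℝ) : Fin d → ℝ :=
  fun i => -(Tsoft C (fun j => -(f j - OmegaStar C f)) (gsoftmax C f) i) + OmegaStar C f

/-- The kernel matrix `K = (exp(-c_{ij}/2))_{ij}`. -/
def kernelK {d : ℕ} (C : Matrix (Fin d) (Fin d) ℝ) : Matrix (Fin d) (Fin d) ℝ :=
  Matrix.of fun i j => Real.exp (-(C i j) / 2)

/-- The Fenchel-Young loss `ℓ_Ω(α,f) = Ω_C^*(f) + Ω_C(α) - ⟨α, f⟩`. -/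
def FYloss {d : ℕ} (C : Matrix (Fin d) (Fin d) ℝ) (α f : Fin d → ℝ) : ℝ :=
  OmegaStar C f + Omega C α - ∑ i, α i * f i

/-- The asymmetric Hausdorff (Bregman) divergence
`D_Ω(α,β) = Ω_C(α) - Ω_C(β) - ⟨∇Ω(β), α - β⟩`. -/
def DOmega {d : ℕ} (C : Matrix (Fin d) (Fin d) ℝ) (α β : Fin d → ℝ) : ℝ :=
  Omega C α - Omega C β - ∑ i, gradOmega C β i * (α i - β i)

/-! Let `β = g-softmax(f)` minimize `Φ_C(·, f) = βᵀ M β` over the simplex, with minimum `m`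
(here `M_{ij} = exp(-(f_i + f_j + c_{ij})/2)`). The first-order conditions give `(M β)_i ≥ m`,
with equality on the support of `β`, and this makes `f + log m` (on the support of `β`) a
symmetric Sinkhorn potential `g` of `β`. For any such `g`, the Gibbs plan
`β_i β_j exp(-(g_i + g_j + c_{ij})/2)` is a coupling of `β` with itself, and the entropic cost of
every coupling `π` equals `2 KL(π ‖ plan) - 2 ⟨β, g⟩`; hence `Ω_C(β) = ⟨β, g⟩ = ⟨β, f⟩ - Ω_C^*(f)`.
Expanding `D_Ω` and `ℓ_Ω`, this Fenchel–Young equality is the decomposition: the `∇Ω` terms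
cancel. -/

open Matrix Topology

lemma sub_le_mul_log_div {p q : ℝ} (hp : 0 ≤ p) (hq : 0 ≤ q) (hpq : q = 0 → p = 0) :
    p - q ≤ p * log (p / q) := by
  rcases hq.eq_or_lt with rfl | hq
  · simp [hpq rfl]
  have hkl : q * InformationTheory.klFun (p / q) = p * log (p / q) + q - p := by
    rw [InformationTheory.klFun]
    field_simp
  linarith [mul_nonneg hq.le (InformationTheory.klFun_nonneg (div_nonneg hp hq.le))]

section QuadraticFormOnSimplex

variable {ι : Type*} [Fintype ι]

lemma sum_mul_pos_of_mem_stdSimplex {β a : ι → ℝ} (hβ : β ∈ stdSimplex ℝ ι)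
    (ha : ∀ j, 0 < a j) : 0 < ∑ j, β j * a j := by
  obtain ⟨j, -, hj⟩ := Finset.exists_ne_zero_of_sum_ne_zero (hβ.2.symm ▸ one_ne_zero)
  exact Finset.sum_pos' (fun k _ => mul_nonneg (hβ.1 k) (ha k).le)
    ⟨j, Finset.mem_univ j, mul_pos ((hβ.1 j).lt_of_ne' hj) (ha j)⟩

lemma nonneg_of_forall_mem_Ioo_nonneg_add_mul {a b : ℝ}
    (h : ∀ t ∈ Set.Ioo (0 : ℝ) 1, 0 ≤ b + t * a) : 0 ≤ b := by
  have hlim : Tendsto (fun t : ℝ => b + t * a) (𝓝[>] 0) (𝓝 b) :=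
    ((by fun_prop : Continuous fun t : ℝ => b + t * a).tendsto' 0 b (by simp)).mono_left
      nhdsWithin_le_nhds
  exact ge_of_tendsto hlim (eventually_of_mem (Ioo_mem_nhdsGT one_pos) h)

lemma Matrix.IsSymm.dotProduct_mulVec_comm {M : Matrix ι ι ℝ} (hM : M.IsSymm) (x y : ι → ℝ) :
    x ⬝ᵥ M *ᵥ y = y ⬝ᵥ M *ᵥ x := by
  rw [dotProduct_mulVec, ← mulVec_transpose, hM.eq, dotProduct_comm]

lemma Matrix.IsSymm.dotProduct_mulVec_add_smul {M : Matrix ι ι ℝ} (hM : M.IsSymm)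
    (x v : ι → ℝ) (t : ℝ) :
    (x + t • v) ⬝ᵥ M *ᵥ (x + t • v) =
      x ⬝ᵥ M *ᵥ x + t * (2 * (v ⬝ᵥ M *ᵥ x) + t * (v ⬝ᵥ M *ᵥ v)) := by
  simp only [mulVec_add, mulVec_smul, add_dotProduct, dotProduct_add, smul_dotProduct,
    dotProduct_smul, smul_eq_mul, hM.dotProduct_mulVec_comm x v]
  ring

variable {M : Matrix ι ι ℝ} {β : ι → ℝ}

/-- First-order optimality along the edge from `β` to the vertex `i` of the simplex. -/
theorem IsMinOn.dotProduct_mulVec_le_mulVec_of_stdSimplex (hM : M.IsSymm)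
    (hβ : β ∈ stdSimplex ℝ ι) (hmin : IsMinOn (fun x => x ⬝ᵥ M *ᵥ x) (stdSimplex ℝ ι) β)
    (i : ι) : β ⬝ᵥ M *ᵥ β ≤ (M *ᵥ β) i := by
  set v := Pi.single i 1 - β
  have hv : v ⬝ᵥ M *ᵥ β = (M *ᵥ β) i - β ⬝ᵥ M *ᵥ β := by
    rw [sub_dotProduct, single_dotProduct, one_mul]
  suffices 0 ≤ 2 * (v ⬝ᵥ M *ᵥ β) by linarith
  refine nonneg_of_forall_mem_Ioo_nonneg_add_mul (a := v ⬝ᵥ M *ᵥ v) fun t ht => ?_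
  have hmem : β + t • v ∈ stdSimplex ℝ ι :=
    (convex_stdSimplex ℝ ι).add_smul_sub_mem hβ (single_mem_stdSimplex ℝ i)
      ⟨ht.1.le, ht.2.le⟩
  have := isMinOn_iff.1 hmin _ hmem
  rw [hM.dotProduct_mulVec_add_smul] at this
  exact nonneg_of_mul_nonneg_right (by linarith) ht.1

theorem IsMinOn.mulVec_eq_dotProduct_mulVec_of_stdSimplex (hM : M.IsSymm)
    (hβ : β ∈ stdSimplex ℝ ι) (hmin : IsMinOn (fun x => x ⬝ᵥ M *ᵥ x) (stdSimplex ℝ ι) β)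
    {i : ι} (hi : β i ≠ 0) : (M *ᵥ β) i = β ⬝ᵥ M *ᵥ β := by
  have hle := hmin.dotProduct_mulVec_le_mulVec_of_stdSimplex hM hβ
  have hsum : ∑ j, β j * ((M *ᵥ β) j - β ⬝ᵥ M *ᵥ β) = 0 := by
    simp only [mul_sub, Finset.sum_sub_distrib, ← Finset.sum_mul, hβ.2, one_mul]
    exact sub_self _
  have := (Finset.sum_eq_zero_iff_of_nonneg fun j _ =>
    mul_nonneg (hβ.1 j) (sub_nonneg.2 (hle j))).1 hsum i (Finset.mem_univ i)
  linarith [(mul_eq_zero.1 this).resolve_left hi]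

end QuadraticFormOnSimplex

section Sinkhorn

variable {d : ℕ} {C : Matrix (Fin d) (Fin d) ℝ} {β g : Fin d → ℝ}

/-- `diag(e^{-f/2}) K diag(e^{-f/2})`. -/
def scaledKernel (C : Matrix (Fin d) (Fin d) ℝ) (f : Fin d → ℝ) : Matrix (Fin d) (Fin d) ℝ :=
  of fun i j => exp (-(f i + f j + C i j) / 2)

lemma scaledKernel_isSymm (hC : C.IsSymm) (f : Fin d → ℝ) : (scaledKernel C f).IsSymm :=
  IsSymm.ext fun i j => by simp only [scaledKernel, of_apply, hC.apply, add_comm (f i)]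

lemma Phi_eq_dotProduct_mulVec (α f : Fin d → ℝ) : Phi C α f = α ⬝ᵥ scaledKernel C f *ᵥ α := by
  simp only [Phi, dotProduct, mulVec, scaledKernel, of_apply, Finset.mul_sum]
  exact Finset.sum_congr rfl fun i _ => Finset.sum_congr rfl fun j _ => by ring

lemma Phi_pos (hβ : β ∈ simplexS d) (f : Fin d → ℝ) : 0 < Phi C β f := by
  rw [Phi_eq_dotProduct_mulVec]
  refine sum_mul_pos_of_mem_stdSimplex hβ fun i => ?_
  rw [mulVec, dotProduct_comm]
  exact sum_mul_pos_of_mem_stdSimplex hβ fun j => exp_pos _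

lemma gsoftmax_spec (hne : (simplexS d).Nonempty) (f : Fin d → ℝ) :
    gsoftmax C f ∈ simplexS d ∧ IsMinOn (fun β => Phi C β f) (simplexS d) (gsoftmax C f) := by
  have hex : ∃ α ∈ simplexS d, IsMinOn (fun β => Phi C β f) (simplexS d) α :=
    (isCompact_stdSimplex ℝ (Fin d)).exists_isMinOn hne (by unfold Phi; fun_prop)
  rw [gsoftmax, dif_pos hex]
  exact hex.choose_spec

lemma OmegaStar_eq_neg_log_Phi {f : Fin d → ℝ} (hβ : β ∈ simplexS d)
    (hmin : IsMinOn (fun β => Phi C β f) (simplexS d) β) :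
    OmegaStar C f = -log (Phi C β f) := by
  have hleast : IsLeast ((fun α => Phi C α f) '' simplexS d) (Phi C β f) :=
    ⟨⟨β, hβ, rfl⟩, by rintro _ ⟨α, hα, rfl⟩; exact hmin hα⟩
  rw [OmegaStar, hleast.csInf_eq]

lemma isSinkhornPotential_iff (hβ : β ∈ simplexS d) :
    IsSinkhornPotential C β g ↔ ∀ i, ∑ j, β j * exp ((-g j - C i j) / 2) = exp (g i / 2) := by
  simp only [IsSinkhornPotential, funext_iff, Tsoft, Pi.neg_apply]
  refine forall_congr' fun i => ⟨fun h => ?_, fun h => by rw [h, log_exp]; ring⟩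
  rw [← exp_log (sum_mul_pos_of_mem_stdSimplex hβ fun j => exp_pos _)]
  congr 1
  linarith

lemma exists_isSinkhornPotential_of_isMinOn (hC : C.IsSymm) {f : Fin d → ℝ}
    (hβ : β ∈ simplexS d) (hmin : IsMinOn (fun β => Phi C β f) (simplexS d) β) :
    ∃ g, IsSinkhornPotential C β g ∧ ∀ i, β i ≠ 0 → g i = f i + log (Phi C β f) := by
  have hfirst : ∀ i, β i ≠ 0 → (scaledKernel C f *ᵥ β) i = Phi C β f := fun i hi => by
    rw [Phi_eq_dotProduct_mulVec]
    refine IsMinOn.mulVec_eq_dotProduct_mulVec_of_stdSimplex (scaledKernel_isSymm hC f) hβ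
      ?_ hi
    simpa only [Phi_eq_dotProduct_mulVec, simplexS] using hmin
  set m := Phi C β f
  set u : Fin d → ℝ := fun j => f j + log m
  set S : Fin d → ℝ := fun i => ∑ j, β j * exp ((-u j - C i j) / 2)
  have hm : 0 < m := Phi_pos hβ f
  have hS : ∀ i, β i ≠ 0 → S i = exp (u i / 2) := fun i hi => by
    have hterm : ∀ j, β j * exp ((-u j - C i j) / 2) =
        exp (u i / 2) * m⁻¹ * (scaledKernel C f i j * β j) := fun j => by
      have : (-u j - C i j) / 2 = u i / 2 + -log m + -(f i + f j + C i j) / 2 := by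
        simp only [u]; ring
      rw [← exp_log hm, ← Real.exp_neg, scaledKernel, of_apply, this, exp_add, exp_add]
      ring
    have hKβ : ∑ j, scaledKernel C f i j * β j = m := hfirst i hi
    simp only [S, hterm, ← Finset.mul_sum, hKβ, inv_mul_cancel_right₀ hm.ne']
  refine ⟨fun i => 2 * log (S i), (isSinkhornPotential_iff hβ).2 fun i => ?_,
    fun i hi => by simp only [hS i hi, log_exp, u]; ring⟩
  have hSpos : 0 < S i := sum_mul_pos_of_mem_stdSimplex hβ fun j => exp_pos _
  rw [mul_div_cancel_left₀ _ two_ne_zero, exp_log hSpos]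
  refine Finset.sum_congr rfl fun j _ => ?_
  rcases eq_or_ne (β j) 0 with hj | hj
  · simp only [hj, zero_mul]
  · rw [hS j hj, log_exp, mul_div_cancel₀ _ two_ne_zero]

variable {p : Matrix (Fin d) (Fin d) ℝ}

def sinkhornPlan (C : Matrix (Fin d) (Fin d) ℝ) (β g : Fin d → ℝ) : Matrix (Fin d) (Fin d) ℝ :=
  of fun i j => β i * β j * exp (-(g i + g j + C i j) / 2)

lemma sinkhornPlan_eq_zero_iff {i j : Fin d} :
    sinkhornPlan C β g i j = 0 ↔ β i * β j = 0 := by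
  simp only [sinkhornPlan, of_apply, mul_eq_zero (b := exp _), exp_ne_zero, or_false]

lemma sinkhornPlan_mem_couplings (hC : C.IsSymm) (hβ : β ∈ simplexS d)
    (hg : IsSinkhornPotential C β g) : sinkhornPlan C β g ∈ couplings β β := by
  have hrow : ∀ i, ∑ j, sinkhornPlan C β g i j = β i := fun i => by
    have hsplit : ∀ j, sinkhornPlan C β g i j =
        β i * exp (-g i / 2) * (β j * exp ((-g j - C i j) / 2)) := fun j => by
      rw [sinkhornPlan, of_apply, show -(g i + g j + C i j) / 2 = -g i / 2 + (-g j - C i j) / 2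
        by ring, exp_add]
      ring
    rw [Finset.sum_congr rfl fun j _ => hsplit j, ← Finset.mul_sum,
      (isSinkhornPotential_iff hβ).1 hg i, mul_assoc, ← exp_add, neg_div, neg_add_cancel,
      exp_zero, mul_one]
  have hsymm : ∀ i j, sinkhornPlan C β g i j = sinkhornPlan C β g j i := fun i j => by
    simp only [sinkhornPlan, of_apply, hC.apply i j, mul_comm (β i), add_comm (g i)]
  refine ⟨fun i j => mul_nonneg (mul_nonneg (hβ.1 i) (hβ.1 j)) (exp_pos _).le, hrow,
    fun j => by simp only [hsymm _ j, hrow], fun i j h => sinkhornPlan_eq_zero_iff.2 h⟩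

lemma sum_sum_mul_add_of_mem_couplings (hp : p ∈ couplings β β) (g : Fin d → ℝ) :
    ∑ i, ∑ j, p i j * (g i + g j) = 2 * ∑ i, β i * g i := by
  simp only [mul_add, Finset.sum_add_distrib]
  rw [Finset.sum_comm (f := fun i j => p i j * g j)]
  simp only [← Finset.sum_mul, hp.2.1, hp.2.2.1]
  ring

lemma OTcost_eq_of_mem_couplings (hp : p ∈ couplings β β) (g : Fin d → ℝ) :
    OTcost C 2 β β p =
      2 * ∑ i, ∑ j, p i j * log (p i j / sinkhornPlan C β g i j) - 2 * ∑ i, β i * g i := by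
  have hentry : ∀ i j, p i j * C i j + 2 * (p i j * log (p i j / (β i * β j))) =
      2 * (p i j * log (p i j / sinkhornPlan C β g i j)) - p i j * (g i + g j) := fun i j => by
    rcases eq_or_ne (β i * β j) 0 with hb | hb
    · simp [hp.2.2.2 i j hb]
    rcases eq_or_ne (p i j) 0 with hp0 | hp0
    · simp [hp0]
    have hdiv : p i j / (β i * β j) =
        p i j / sinkhornPlan C β g i j * exp (-(g i + g j + C i j) / 2) := by
      rw [sinkhornPlan, of_apply]
      field_simp
    rw [hdiv, log_mul (div_ne_zero hp0 (mt sinkhornPlan_eq_zero_iff.1 hb)) (exp_ne_zero _),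
      log_exp]
    ring
  rw [OTcost, ← sum_sum_mul_add_of_mem_couplings hp g]
  simp only [Finset.mul_sum, ← Finset.sum_add_distrib, ← Finset.sum_sub_distrib, hentry]

theorem Omega_eq_sum_mul_of_isSinkhornPotential (hC : C.IsSymm) (hβ : β ∈ simplexS d)
    (hg : IsSinkhornPotential C β g) : Omega C β = ∑ i, β i * g i := by
  have hq := sinkhornPlan_mem_couplings hC hβ hg
  have hleast : IsLeast (OTcost C 2 β β '' couplings β β) (-2 * ∑ i, β i * g i) := by
    refine ⟨⟨_, hq, ?_⟩, ?_⟩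
    · have hself : ∀ x : ℝ, x * log (x / x) = 0 := fun x => by
        rcases eq_or_ne x 0 with h | h <;> simp [h]
      simp only [OTcost_eq_of_mem_couplings hq g, hself, Finset.sum_const_zero]
      ring
    rintro _ ⟨p, hp, rfl⟩
    have hgibbs : ∑ i, ∑ j, (p i j - sinkhornPlan C β g i j) ≤
        ∑ i, ∑ j, p i j * log (p i j / sinkhornPlan C β g i j) :=
      Finset.sum_le_sum fun i _ => Finset.sum_le_sum fun j _ =>
        sub_le_mul_log_div (hp.1 i j) (hq.1 i j)
          fun h => hp.2.2.2 i j (sinkhornPlan_eq_zero_iff.1 h)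
    have hmass : ∑ i, ∑ j, (p i j - sinkhornPlan C β g i j) = 0 := by
      simp only [Finset.sum_sub_distrib, hp.2.1, hq.2.1, sub_self, Finset.sum_const_zero]
    rw [OTcost_eq_of_mem_couplings hp g]
    linarith
  rw [Omega, OT, hleast.csInf_eq]
  ring

end Sinkhorn

theorem Omega_gsoftmax_add_OmegaStar {d : ℕ} {C : Matrix (Fin d) (Fin d) ℝ} (hC : C.IsSymm)
    (hne : (simplexS d).Nonempty) (f : Fin d → ℝ) :
    Omega C (gsoftmax C f) + OmegaStar C f = ∑ i, gsoftmax C f i * f i := by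
  obtain ⟨hβ, hmin⟩ := gsoftmax_spec (C := C) hne f
  set β := gsoftmax C f
  obtain ⟨g, hg, hgf⟩ := exists_isSinkhornPotential_of_isMinOn hC hβ hmin
  have hgsum : ∑ i, β i * g i = ∑ i, β i * f i + log (Phi C β f) := by
    rw [← one_mul (log _), ← hβ.2, Finset.sum_mul, ← Finset.sum_add_distrib]
    refine Finset.sum_congr rfl fun i _ => ?_
    rcases eq_or_ne (β i) 0 with hi | hi
    · simp [hi]
    · rw [hgf i hi]
      ring
  rw [Omega_eq_sum_mul_of_isSinkhornPotential hC hβ hg, OmegaStar_eq_neg_log_Phi hβ hmin, hgsum]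
  ring

theorem bregman_fenchel_young_decomposition_general (d : ℕ)
    (C : Matrix (Fin d) (Fin d) ℝ) (hCsym : C.IsSymm)
    (α : Fin d → ℝ) (hα : α ∈ simplexS d) (f : Fin d → ℝ) :
    DOmega C α (gsoftmax C f) = FYloss C α f +
      ∑ i, (f i - gradOmega C (gsoftmax C f) i) * (α i - gsoftmax C f i) := by
  have hFY := Omega_gsoftmax_add_OmegaStar hCsym ⟨α, hα⟩ f
  have hsplit : ∑ i, (f i - gradOmega C (gsoftmax C f) i) * (α i - gsoftmax C f i) =
      ∑ i, α i * f i - ∑ i, gsoftmax C f i * f i -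
        ∑ i, gradOmega C (gsoftmax C f) i * (α i - gsoftmax C f i) := by
    rw [← Finset.sum_sub_distrib, ← Finset.sum_sub_distrib]
    exact Finset.sum_congr rfl fun i _ => by ring
  rw [DOmega, FYloss, hsplit]
  linarith

/-- Generic Bregman / Fenchel-Young decomposition for the Sinkhorn negentropy:
`D_Ω(α, g-softmax(f)) = ℓ_Ω(α, f) + ⟨f - ∇Ω(g-softmax(f)), α - g-softmax(f)⟩`. -/
theorem bregman_fenchel_young_decomposition (d : ℕ) (hd : 1 ≤ d)
    (C : Matrix (Fin d) (Fin d) ℝ) (hCsym : C.IsSymm) (hCdiag : ∀ i, C i i = 0)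
    (hK : (kernelK C).PosDef) (α : Fin d → ℝ) (hα : α ∈ simplexS d) (f : Fin d → ℝ) :
    DOmega C α (gsoftmax C f) = FYloss C α f +
      ∑ i, (f i - gradOmega C (gsoftmax C f) i) * (α i - gsoftmax C f i) :=
  bregman_fenchel_young_decomposition_general d C hCsym α hα f
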